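/- arXiv:1811.01670 — 5 statements merged into one kernel-verified Lean document; each statement's English description precedes it below -/
import Mathlib

section
/- Let A be a type of memory-block addresses, a : A a distinguished block, N a positive associativity, and consider a-focused cache states and the transition and downward-closure-step relations as defined. For every finite sequence of blocks b_0, …, b_n all different from a and all a-focused states u_0 and u_{n+1}, the following are equivalent: (1) there exist a-focused states v_0, …, v_n and u_1, …, u_n such that u_i →b_i v_i and v_i →↓ u_{i+1} for all 0 ≤ i ≤ n; (2) there exist a-focused states u'_1, …, u'_{n+1} such that u_0 →b_0 u'_1, u'_i →b_i u'_{i+1} for all 1 ≤ i ≤ n, and u'_{n+1} →↓ u_{n+1}. -/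
/-- The `a`-focused cache transition relation for an access to block `b` in an
LRU cache of associativity `N`: `none` (written 𝒜) means `a` is not in the cache,
`some x` means exactly the blocks in `x` are younger than `a`. -/
inductive FStep {A : Type*} [DecidableEq A] (N : ℕ) (b : A) :
    Option (Finset A) → Option (Finset A) → Prop
  | miss : FStep N b none none
  | hit (x : Finset A) (h : (x ∪ {b}).card < N) : FStep N b (some x) (some (x ∪ {b}))
  | evict (x : Finset A) (h : (x ∪ {b}).card = N) : FStep N b (some x) none

/-- The downward-closure step relation on `a`-focused cache states. -/
inductive DownStep {A : Type*} : Option (Finset A) → Option (Finset A) → Prop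
  | top (y : Option (Finset A)) : DownStep none y
  | sub (x y : Finset A) (h : y ⊆ x) : DownStep (some x) (some y)

/-!
`DownStep` is a preorder, and a downward step followed by a transition can be traded for a
transition followed by a downward step, as long as fewer than `N` blocks are younger than `a`
in the source state; every target of a transition has this property. Pushing the downward steps
to the end one at a time gives the forward direction; conversely, all the intermediate downward
steps may be taken to be reflexive.
-/

def CardLT {A : Type*} (N : ℕ) : Option (Finset A) → Prop
  | none => True
  | some x => x.card < N

namespace FStep

variable {A : Type*} [DecidableEq A] {N : ℕ} {b : A}

theorem cardLT_right {x y : Option (Finset A)} (h : FStep N b x y) : CardLT N y := by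
  cases h with
  | miss => trivial
  | hit x hx => exact hx
  | evict => trivial

end FStep

namespace DownStep

variable {A : Type*}

theorem refl : ∀ x : Option (Finset A), DownStep x x
  | none => top none
  | some x => sub x x subset_rfl

theorem trans {x y z : Option (Finset A)} (hxy : DownStep x y) (hyz : DownStep y z) :
    DownStep x z := by
  cases hxy with
  | top => exact top z
  | sub x y hyx =>
    cases hyz with
    | sub _ z hzy => exact sub x z (hzy.trans hyx)

variable [DecidableEq A] {N : ℕ} {b : A}

theorem exists_fStep_downStep {x y z : Option (Finset A)} (hxy : DownStep x y)
    (hx : CardLT N x) (hyz : FStep N b y z) : ∃ w, FStep N b x w ∧ DownStep w z := by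
  cases hxy with
  | top => exact ⟨none, FStep.miss, top z⟩
  | sub x y hyx =>
    have hunion : y ∪ {b} ⊆ x ∪ {b} := Finset.union_subset_union hyx subset_rfl
    have hle : (x ∪ {b}).card ≤ N :=
      calc (x ∪ {b}).card ≤ x.card + 1 := Finset.card_union_le x {b}
        _ ≤ N := hx
    cases hyz with
    | hit =>
      rcases hle.lt_or_eq with hlt | heq
      · exact ⟨some (x ∪ {b}), FStep.hit x hlt, sub _ _ hunion⟩
      · exact ⟨none, FStep.evict x heq, top _⟩
    | evict _ hy =>
      have hge : N ≤ (x ∪ {b}).card := hy ▸ Finset.card_le_card hunion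
      exact ⟨none, FStep.evict x (hle.antisymm hge), top none⟩

end DownStep

section Chains

variable {A : Type*} [DecidableEq A] {N : ℕ} (b : ℕ → A)

theorem exists_fStep_chain_of_interleaved (u v : ℕ → Option (Finset A)) :
    ∀ n, (∀ i ≤ n, FStep N (b i) (u i) (v i) ∧ DownStep (v i) (u (i + 1))) →
      ∃ u' : ℕ → Option (Finset A), u' 0 = u 0 ∧
        (∀ i ≤ n, FStep N (b i) (u' i) (u' (i + 1))) ∧ DownStep (u' (n + 1)) (u (n + 1))
  | 0, h => ⟨fun i => if i = 0 then u 0 else v 0, rfl,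
      fun i hi => by obtain rfl := Nat.le_zero.mp hi; exact (h 0 le_rfl).1, (h 0 le_rfl).2⟩
  | n + 1, h => by
    obtain ⟨u', h0, hchain, hdown⟩ :=
      exists_fStep_chain_of_interleaved u v n fun i hi => h i (hi.trans n.le_succ)
    obtain ⟨hstep, hdown'⟩ := h (n + 1) le_rfl
    obtain ⟨w, hw, hwdown⟩ :=
      hdown.exists_fStep_downStep (hchain n le_rfl).cardLT_right hstep
    refine ⟨Function.update u' (n + 2) w, by simpa using h0, fun i hi => ?_, ?_⟩
    · rcases hi.lt_or_eq with hlt | rfl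
      · simpa [Function.update_of_ne (by omega : i ≠ n + 2),
          Function.update_of_ne (by omega : i + 1 ≠ n + 2)] using hchain i (by omega)
      · simpa using hw
    · simpa using hwdown.trans hdown'

theorem exists_interleaved_of_fStep_chain (n : ℕ) (u' : ℕ → Option (Finset A))
    (ufin : Option (Finset A)) (hchain : ∀ i ≤ n, FStep N (b i) (u' i) (u' (i + 1)))
    (hdown : DownStep (u' (n + 1)) ufin) :
    ∃ u v : ℕ → Option (Finset A), u 0 = u' 0 ∧ u (n + 1) = ufin ∧
      ∀ i ≤ n, FStep N (b i) (u i) (v i) ∧ DownStep (v i) (u (i + 1)) := by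
  refine ⟨Function.update u' (n + 1) ufin, fun i => u' (i + 1), by simp, by simp,
    fun i hi => ⟨?_, ?_⟩⟩
  · simpa [Function.update_of_ne (by omega : i ≠ n + 1)] using hchain i hi
  · rcases hi.lt_or_eq with hlt | rfl
    · simpa [Function.update_of_ne (by omega : i + 1 ≠ n + 1)] using DownStep.refl (u' (i + 1))
    · simpa using hdown

end Chains

theorem downStep_interleave_iff_general {A : Type*} [DecidableEq A] (N : ℕ)
    (n : ℕ) (b : ℕ → A)
    (u0 ufin : Option (Finset A)) :
    (∃ u v : ℕ → Option (Finset A),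
        u 0 = u0 ∧ u (n + 1) = ufin ∧
        ∀ i ≤ n, FStep N (b i) (u i) (v i) ∧ DownStep (v i) (u (i + 1))) ↔
    (∃ u' : ℕ → Option (Finset A),
        FStep N (b 0) u0 (u' 1) ∧
        (∀ i, 1 ≤ i → i ≤ n → FStep N (b i) (u' i) (u' (i + 1))) ∧
        DownStep (u' (n + 1)) ufin) := by
  constructor
  · rintro ⟨u, v, rfl, rfl, h⟩
    obtain ⟨u', h0, hchain, hdown⟩ := exists_fStep_chain_of_interleaved b u v n h
    exact ⟨u', h0 ▸ hchain 0 (Nat.zero_le n), fun i _ hi => hchain i hi, hdown⟩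
  · rintro ⟨u', hfirst, hchain, hdown⟩
    obtain ⟨u, v, hu0, hufin, h⟩ := exists_interleaved_of_fStep_chain b n
      (Function.update u' 0 u0) ufin
      (fun i hi => by
        rcases Nat.eq_zero_or_pos i with rfl | hpos
        · simpa using hfirst
        · simpa [Function.update_of_ne hpos.ne'] using hchain i hpos hi)
      (by simpa using hdown)
    exact ⟨u, v, by simpa using hu0, hufin, h⟩

/-- Interleaving downward-closure steps with focused transitions is equivalent to
performing all focused transitions first and a single downward-closure step at the end. -/
theorem downStep_interleave_iff {A : Type*} [DecidableEq A] (a : A) (N : ℕ) (hN : 1 ≤ N)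
    (n : ℕ) (b : ℕ → A) (hb : ∀ i ≤ n, b i ≠ a)
    (u0 ufin : Option (Finset A)) :
    (∃ u v : ℕ → Option (Finset A),
        u 0 = u0 ∧ u (n + 1) = ufin ∧
        ∀ i ≤ n, FStep N (b i) (u i) (v i) ∧ DownStep (v i) (u (i + 1))) ↔
    (∃ u' : ℕ → Option (Finset A),
        FStep N (b 0) u0 (u' 1) ∧
        (∀ i, 1 ≤ i → i ≤ n → FStep N (b i) (u' i) (u' (i + 1))) ∧
        DownStep (u' (n + 1)) ufin) :=
  downStep_interleave_iff_general N n b u0 ufin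
end

section
/- Let A be a type of memory-block addresses, a : A a distinguished block, N a positive associativity, and consider a-focused cache states and the transition and upward-closure-step relations as defined. For every finite sequence of blocks b_0, …, b_n all different from a and all a-focused states u_0 and u_{n+1}, the following are equivalent: (1) there exist a-focused states v_0, …, v_n and u_1, …, u_n such that u_i →b_i v_i and v_i →↑ u_{i+1} for all 0 ≤ i ≤ n; (2) there exist a-focused states u'_1, …, u'_{n+1} such that u_0 →b_0 u'_1, u'_i →b_i u'_{i+1} for all 1 ≤ i ≤ n, and u'_{n+1} →↑ u_{n+1}. -/
/-- The upward-closure step relation on `a`-focused cache states. -/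
inductive UpStep {A : Type*} : Option (Finset A) → Option (Finset A) → Prop
  | bot (x : Option (Finset A)) : UpStep x none
  | sup (x y : Finset A) (h : x ⊆ y) : UpStep (some x) (some y)

/-! An upward step followed by a transition can always be replaced by a transition followed by an
upward step, as long as the state we start from holds fewer than `N` blocks; the states reached by
transitions have this property. So the upward steps of an interleaved run can be pushed, one after
another, to its end, where they compose to a single upward step. Conversely a run of transitions
followed by one upward step is an interleaved run whose intermediate upward steps are reflexive. -/

namespace UpStep

variable {A : Type*}

theorem refl : ∀ x : Option (Finset A), UpStep x x
  | none => bot none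
  | some s => sup s s subset_rfl

theorem trans {x y z : Option (Finset A)} (hxy : UpStep x y) (hyz : UpStep y z) : UpStep x z := by
  cases hyz with
  | bot => exact bot x
  | sup y z hyz =>
    cases hxy with
    | sup x y hxy => exact sup x z (hxy.trans hyz)

end UpStep

namespace FStep

variable {A : Type*} [DecidableEq A] {N : ℕ} {b : A}

theorem card_lt {x : Option (Finset A)} {s : Finset A} (h : FStep N b x (some s)) :
    s.card < N := by
  cases h with
  | hit x hx => exact hx

theorem exists_of_card_union_le {s : Finset A} (h : (s ∪ {b}).card ≤ N) :
    ∃ z, FStep N b (some s) z := by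
  rcases h.lt_or_eq with h | h
  · exact ⟨_, hit s h⟩
  · exact ⟨_, evict s h⟩

theorem exists_of_card_lt {s : Finset A} (h : s.card < N) : ∃ z, FStep N b (some s) z :=
  exists_of_card_union_le <| (Finset.card_union_le s {b}).trans <| by
    rw [Finset.card_singleton]; omega

theorem exists_fStep_upStep_of_upStep {x y z : Option (Finset A)} (hxy : UpStep x y)
    (hyz : FStep N b y z) (hx : ∀ s ∈ x, s.card < N) : ∃ z', FStep N b x z' ∧ UpStep z' z := by
  cases hxy with
  | bot x =>
    cases hyz
    cases x with
    | none => exact ⟨none, miss, UpStep.bot none⟩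
    | some s =>
      obtain ⟨z', hz'⟩ := exists_of_card_lt (b := b) (hx s rfl)
      exact ⟨z', hz', UpStep.bot z'⟩
  | sup x y hxy =>
    have hunion : x ∪ {b} ⊆ y ∪ {b} := Finset.union_subset_union hxy subset_rfl
    cases hyz with
    | hit y hy => exact ⟨_, hit x ((Finset.card_le_card hunion).trans_lt hy), UpStep.sup _ _ hunion⟩
    | evict y hy =>
      obtain ⟨z', hz'⟩ := exists_of_card_union_le (hy ▸ Finset.card_le_card hunion)
      exact ⟨z', hz', UpStep.bot z'⟩

end FStep

section Runs

variable {A : Type*} [DecidableEq A] {N : ℕ} {b : ℕ → A}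

theorem exists_fStep_run_of_interleaved {n : ℕ} {u v : ℕ → Option (Finset A)}
    (hrun : ∀ i ≤ n, FStep N (b i) (u i) (v i) ∧ UpStep (v i) (u (i + 1))) :
    ∃ w : ℕ → Option (Finset A), w 0 = u 0 ∧
      (∀ i ≤ n, FStep N (b i) (w i) (w (i + 1))) ∧ UpStep (w (n + 1)) (u (n + 1)) := by
  induction n with
  | zero =>
    refine ⟨fun i => if i = 0 then u 0 else v 0, rfl, ?_, by simpa using (hrun 0 le_rfl).2⟩
    intro i hi
    obtain rfl := Nat.le_zero.mp hi
    simpa using (hrun 0 le_rfl).1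
  | succ n ih =>
    obtain ⟨w, hw0, hwrun, hwup⟩ := ih fun i hi => hrun i (by omega)
    obtain ⟨hstep, hup⟩ := hrun (n + 1) le_rfl
    have hvalid : ∀ s ∈ w (n + 1), s.card < N := fun s hs => (hs ▸ hwrun n le_rfl).card_lt
    obtain ⟨z, hz, hzup⟩ := FStep.exists_fStep_upStep_of_upStep hwup hstep hvalid
    refine ⟨Function.update w (n + 2) z, by simpa using hw0, ?_, by simpa using hzup.trans hup⟩
    intro i hi
    rcases hi.lt_or_eq with hi | rfl
    · rw [Function.update_of_ne (by omega), Function.update_of_ne (by omega)]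
      exact hwrun i (by omega)
    · rw [Function.update_of_ne (by omega), Function.update_self]
      exact hz

theorem exists_interleaved_of_fStep_run {n : ℕ} {w : ℕ → Option (Finset A)}
    (hrun : ∀ i ≤ n, FStep N (b i) (w i) (w (i + 1))) {ufin : Option (Finset A)}
    (hup : UpStep (w (n + 1)) ufin) :
    ∃ u v : ℕ → Option (Finset A), u 0 = w 0 ∧ u (n + 1) = ufin ∧
      ∀ i ≤ n, FStep N (b i) (u i) (v i) ∧ UpStep (v i) (u (i + 1)) := by
  refine ⟨Function.update w (n + 1) ufin, fun i => w (i + 1), by simp, by simp, ?_⟩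
  intro i hi
  rw [Function.update_of_ne (by omega)]
  refine ⟨hrun i hi, ?_⟩
  rcases hi.lt_or_eq with hi | rfl
  · rw [Function.update_of_ne (by omega)]
    exact UpStep.refl _
  · simpa using hup

end Runs

theorem upStep_interleave_iff_general {A : Type*} [DecidableEq A] (N : ℕ)
    (n : ℕ) (b : ℕ → A)
    (u0 ufin : Option (Finset A)) :
    (∃ u v : ℕ → Option (Finset A),
        u 0 = u0 ∧ u (n + 1) = ufin ∧
        ∀ i ≤ n, FStep N (b i) (u i) (v i) ∧ UpStep (v i) (u (i + 1))) ↔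
    (∃ u' : ℕ → Option (Finset A),
        FStep N (b 0) u0 (u' 1) ∧
        (∀ i, 1 ≤ i → i ≤ n → FStep N (b i) (u' i) (u' (i + 1))) ∧
        UpStep (u' (n + 1)) ufin) := by
  constructor
  · rintro ⟨u, v, rfl, rfl, hrun⟩
    obtain ⟨w, hw0, hwrun, hwup⟩ := exists_fStep_run_of_interleaved hrun
    exact ⟨w, hw0 ▸ hwrun 0 (Nat.zero_le n), fun i _ hi => hwrun i hi, hwup⟩
  · rintro ⟨u', hstep0, hsteps, hup⟩
    have hrun : ∀ i ≤ n, FStep N (b i) (Function.update u' 0 u0 i)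
        (Function.update u' 0 u0 (i + 1)) := by
      intro i hi
      rcases i with _ | i
      · simpa using hstep0
      · simpa using hsteps (i + 1) (by omega) hi
    simpa using exists_interleaved_of_fStep_run hrun (by simpa using hup)

/-- Interleaving upward-closure steps with focused transitions is equivalent to
performing all focused transitions first and a single upward-closure step at the end. -/
theorem upStep_interleave_iff {A : Type*} [DecidableEq A] (a : A) (N : ℕ) (hN : 1 ≤ N)
    (n : ℕ) (b : ℕ → A) (hb : ∀ i ≤ n, b i ≠ a)
    (u0 ufin : Option (Finset A)) :
    (∃ u v : ℕ → Option (Finset A),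
        u 0 = u0 ∧ u (n + 1) = ufin ∧
        ∀ i ≤ n, FStep N (b i) (u i) (v i) ∧ UpStep (v i) (u (i + 1))) ↔
    (∃ u' : ℕ → Option (Finset A),
        FStep N (b 0) u0 (u' 1) ∧
        (∀ i, 1 ≤ i → i ≤ n → FStep N (b i) (u' i) (u' (i + 1))) ∧
        UpStep (u' (n + 1)) ufin) :=
  upStep_interleave_iff_general N n b u0 ufin
end

section
/- Fix an associativity N ≥ 1 and a type A of memory-block addresses with decidable equality. For every block a : A and all lists t1, t2 : List A with a ∉ t2, the block a is contained in the LRU cache state obtained by executing the trace t1 ++ (a :: t2) from the empty cache if and only if the number of distinct addresses occurring in t2 is at most N − 1. Moreover, if a does not occur in a trace t at all, then a is not contained in the LRU cache state obtained by executing t from the empty cache. -/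
/-- An LRU cache of associativity `N` is a list of pairwise distinct addresses,
youngest first. Accessing block `b` rejuvenates `b` (or loads it) and keeps
only the `N` youngest blocks. -/
def lruAccess {A : Type*} [DecidableEq A] (N : ℕ) (s : List A) (b : A) : List A :=
  ((b :: s.erase b).take N)

/-- The LRU cache state of associativity `N` obtained by executing trace `t`
from the empty cache. -/
def lruRun {A : Type*} [DecidableEq A] (N : ℕ) (t : List A) : List A :=
  t.foldl (lruAccess N) []

/-! Without truncation, an access simply moves the block to the front, so the untruncated state
lists the distinct blocks of the trace from most to least recently accessed; truncating after
every access gives the same result as truncating once at the end. After `t1 ++ a :: t2` with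
`a ∉ t2`, the untruncated state starts with the distinct blocks of `t2`, followed by `a`, so `a`
survives the truncation to `N` blocks iff there are fewer than `N` of them. -/

theorem List.take_erase_take_succ {A : Type*} [DecidableEq A] (l : List A) (b : A) (n : ℕ) :
    ((l.take (n + 1)).erase b).take n = (l.erase b).take n := by
  induction l generalizing n with
  | nil => simp
  | cons x l ih =>
    by_cases hx : x = b
    · subst hx
      simp
    · cases n with
      | zero => simp
      | succ n => simp [hx, ih]

section

variable {A : Type*} [DecidableEq A]

def mruAccess (s : List A) (b : A) : List A :=
  b :: s.erase b

def mruRun (t : List A) : List A :=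
  t.foldl mruAccess []

theorem lruAccess_take (N : ℕ) (s : List A) (b : A) :
    lruAccess N (s.take N) b = lruAccess N s b := by
  cases N with
  | zero => rfl
  | succ n => simp [lruAccess, List.take_erase_take_succ]

theorem lruRun_eq_take_mruRun (N : ℕ) (t : List A) : lruRun N t = (mruRun t).take N := by
  simpa [lruRun, mruRun] using List.foldl_hom (f := fun s : List A => s.take N) (l := t)
    (init := []) (g₁ := mruAccess) (g₂ := lruAccess N) (fun s b => lruAccess_take N s b)

theorem mruRun_append_singleton (t : List A) (b : A) :
    mruRun (t ++ [b]) = mruAccess (mruRun t) b := by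
  simp [mruRun]

theorem mem_mruRun {t : List A} {b : A} : b ∈ mruRun t ↔ b ∈ t := by
  induction t using List.reverseRecOn with
  | nil => simp [mruRun]
  | append_singleton t c ih =>
    by_cases hbc : b = c
    · simp [mruRun_append_singleton, mruAccess, hbc]
    · simp [mruRun_append_singleton, mruAccess, hbc, List.mem_erase_of_ne hbc, ih]

theorem nodup_mruRun (t : List A) : (mruRun t).Nodup := by
  induction t using List.reverseRecOn with
  | nil => simp [mruRun]
  | append_singleton t b ih =>
    rw [mruRun_append_singleton, mruAccess, List.nodup_cons]
    exact ⟨ih.not_mem_erase, ih.erase b⟩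

theorem length_mruRun (t : List A) : (mruRun t).length = t.toFinset.card := by
  rw [← List.toFinset_card_of_nodup (nodup_mruRun t)]
  congr 1
  ext b
  simp [mem_mruRun]

theorem exists_foldl_mruAccess_cons_eq {a : A} {t : List A} (ha : a ∉ t) (s : List A) :
    ∃ w, t.foldl mruAccess (a :: s) = mruRun t ++ a :: w := by
  induction t using List.reverseRecOn with
  | nil => exact ⟨s, rfl⟩
  | append_singleton t b ih =>
    simp only [List.mem_append, List.mem_singleton, not_or] at ha
    obtain ⟨w, hw⟩ := ih ha.1
    rw [List.foldl_append, hw, mruRun_append_singleton]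
    by_cases hb : b ∈ mruRun t
    · exact ⟨w, by simp [mruAccess, List.erase_append_left _ hb]⟩
    · refine ⟨w.erase b, ?_⟩
      simp [mruAccess, List.erase_append_right _ hb, ha.2,
        List.erase_of_not_mem hb]

theorem mruRun_append_cons_eq {a : A} {t₂ : List A} (ha : a ∉ t₂) (t₁ : List A) :
    ∃ w, mruRun (t₁ ++ a :: t₂) = mruRun t₂ ++ a :: w := by
  simpa [mruRun, mruAccess, List.foldl_append] using exists_foldl_mruAccess_cons_eq ha ((mruRun t₁).erase a)

end

theorem List.mem_take_append_cons_iff {α : Type*} {u w : List α} {a : α} (ha : a ∉ u) (n : ℕ) :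
    a ∈ (u ++ a :: w).take n ↔ u.length < n := by
  rw [List.take_append, List.mem_append, or_iff_right (fun h => ha (List.mem_of_mem_take h))]
  cases h : n - u.length with
  | zero => simp; omega
  | succ k => simp; omega

/-- An access to `a` after trace `t1 ++ a :: t2` (with no later access to `a`) is a
hit iff at most `N - 1` distinct blocks were accessed since the last access to `a`;
and a block that is never accessed is not in the cache. -/
theorem lru_hit_iff {A : Type*} [DecidableEq A] (N : ℕ) (hN : 1 ≤ N) :
    (∀ (a : A) (t1 t2 : List A), a ∉ t2 →
        (a ∈ lruRun N (t1 ++ a :: t2) ↔ t2.toFinset.card ≤ N - 1)) ∧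
    (∀ (a : A) (t : List A), a ∉ t → a ∉ lruRun N t) := by
  refine ⟨fun a t1 t2 ha => ?_, fun a t ha h => ?_⟩
  · obtain ⟨w, hw⟩ := mruRun_append_cons_eq ha t1
    rw [lruRun_eq_take_mruRun, hw, List.mem_take_append_cons_iff (mt mem_mruRun.1 ha),
      length_mruRun]
    omega
  · rw [lruRun_eq_take_mruRun] at h
    exact ha (mem_mruRun.1 (List.mem_of_mem_take h))
end

section
/- Fix an associativity N ≥ 1, a type A of memory-block addresses with decidable equality, and a distinguished block a : A. Let s : List A be a valid LRU cache state (pairwise distinct entries, length at most N). Then for every block b ≠ a, the a-focused abstraction of the state obtained by accessing b in s, namely focus_a((b :: s.erase b).take N), equals the result of the a-focused transition applied to focus_a(s): it is none if focus_a(s) = none; it is some (x ∪ {b}) if focus_a(s) = some x and |x ∪ {b}| < N; and it is none if focus_a(s) = some x and |x ∪ {b}| = N. -/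
/-- The `a`-focused abstraction of a concrete LRU cache state: `some` of the set
of blocks younger than `a` if `a` is in the cache, `none` (𝒜) otherwise. -/
def lruFocus {A : Type*} [DecidableEq A] (a : A) (s : List A) : Option (Finset A) :=
  if a ∈ s then some (s.takeWhile (fun x => decide (x ≠ a))).toFinset else none

/-!
Accessing `b ≠ a` moves `b` to the front and leaves the relative order of the other blocks
unchanged, so the blocks younger than `a` become those younger than `a` before, plus `b`.
Truncation to the `N` youngest blocks keeps `a` exactly when fewer than `N` blocks are younger
than it, and since the state has no duplicates that number is the cardinality of `x ∪ {b}`.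
-/

namespace List

variable {A : Type*} [DecidableEq A]

theorem mem_take_iff_length_takeWhile_ne_lt (a : A) (l : List A) (n : ℕ) :
    a ∈ l.take n ↔ a ∈ l ∧ (l.takeWhile (· ≠ a)).length < n := by
  induction l generalizing n with
  | nil => simp
  | cons c l ih =>
    cases n with
    | zero => simp
    | succ n =>
      by_cases hc : c = a
      · simp [hc]
      · simp [hc, ih, Ne.symm hc]

theorem takeWhile_ne_cons_erase {a b : A} (hb : b ≠ a) (l : List A) :
    (b :: l.erase b).takeWhile (· ≠ a) = b :: (l.takeWhile (· ≠ a)).erase b := by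
  induction l with
  | nil => simp [hb]
  | cons c l ih =>
    by_cases hca : c = a
    · subst hca
      simp [hb, Ne.symm hb]
    · by_cases hcb : c = b <;> simp_all

theorem insert_toFinset_erase (b : A) (l : List A) :
    insert b (l.erase b).toFinset = insert b l.toFinset := by
  ext y
  by_cases hy : y = b
  · simp [hy]
  · simp [hy, mem_erase_of_ne hy]

end List

section

variable {A : Type*} [DecidableEq A]

theorem lruFocus_eq_some_iff {a : A} {l : List A} {x : Finset A} :
    lruFocus a l = some x ↔ a ∈ l ∧ (l.takeWhile (· ≠ a)).toFinset = x := by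
  unfold lruFocus
  split_ifs with ha <;> simp [ha]

theorem lruFocus_take (a : A) (l : List A) (n : ℕ) :
    lruFocus a (l.take n) =
      if (l.takeWhile (· ≠ a)).length < n then lruFocus a l else none := by
  by_cases hlt : (l.takeWhile (· ≠ a)).length < n
  · have htake : (l.take n).takeWhile (· ≠ a) = l.takeWhile (· ≠ a) := by
      rw [← List.take_takeWhile, List.take_of_length_le hlt.le]
    simp only [lruFocus, List.mem_take_iff_length_takeWhile_ne_lt, hlt, htake, and_true,
      ↓reduceIte]
  · simp only [lruFocus, List.mem_take_iff_length_takeWhile_ne_lt, hlt, and_false, ↓reduceIte]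

theorem lruFocus_cons_erase {a b : A} (hb : b ≠ a) (l : List A) :
    lruFocus a (b :: l.erase b) = (lruFocus a l).map (· ∪ {b}) := by
  unfold lruFocus
  have hmem : a ∈ b :: l.erase b ↔ a ∈ l := by
    simp [Ne.symm hb, List.mem_erase_of_ne (Ne.symm hb)]
  rw [List.takeWhile_ne_cons_erase hb]
  by_cases ha : a ∈ l
  · simp [ha, hmem, List.insert_toFinset_erase]
  · simp [ha, hmem]

theorem length_takeWhile_ne_cons_erase {a b : A} (hb : b ≠ a) {l : List A} (hl : l.Nodup) :
    ((b :: l.erase b).takeWhile (· ≠ a)).length =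
      ((l.takeWhile (· ≠ a)).toFinset ∪ {b}).card := by
  have hnd : ((b :: l.erase b).takeWhile (· ≠ a)).Nodup :=
    (List.takeWhile_sublist _).nodup (List.nodup_cons.mpr ⟨hl.not_mem_erase, hl.erase b⟩)
  rw [← List.toFinset_card_of_nodup hnd, List.takeWhile_ne_cons_erase hb, List.toFinset_cons,
    List.insert_toFinset_erase, Finset.insert_eq, Finset.union_comm]

theorem lruFocus_lruAccess_of_ne (N : ℕ) {a b : A} (hb : b ≠ a) (s : List A) :
    lruFocus a (lruAccess N s b) =
      if ((b :: s.erase b).takeWhile (· ≠ a)).length < N then (lruFocus a s).map (· ∪ {b})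
      else none := by
  rw [lruAccess, lruFocus_take, lruFocus_cons_erase hb]

end

theorem lruFocus_access_ne_general {A : Type*} [DecidableEq A] (N : ℕ) (a : A)
    (s : List A) (hnd : s.Nodup)
    (b : A) (hb : b ≠ a) :
    (lruFocus a s = none → lruFocus a (lruAccess N s b) = none) ∧
    (∀ x : Finset A, lruFocus a s = some x → (x ∪ {b}).card < N →
        lruFocus a (lruAccess N s b) = some (x ∪ {b})) ∧
    (∀ x : Finset A, lruFocus a s = some x → (x ∪ {b}).card = N →
        lruFocus a (lruAccess N s b) = none) := by
  have hstep := lruFocus_lruAccess_of_ne N hb s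
  refine ⟨fun hnone => by simp [hstep, hnone], fun x hx hlt => ?_, fun x hx hfull => ?_⟩
  · obtain ⟨-, rfl⟩ := lruFocus_eq_some_iff.1 hx
    rw [hstep, length_takeWhile_ne_cons_erase hb hnd, if_pos hlt, hx, Option.map_some]
  · obtain ⟨-, rfl⟩ := lruFocus_eq_some_iff.1 hx
    rw [hstep, length_takeWhile_ne_cons_erase hb hnd, if_neg hfull.not_lt]

/-- The `a`-focused abstraction commutes with an access to a block `b ≠ a`:
the abstraction of the updated state is given by the `a`-focused transition. -/
theorem lruFocus_access_ne {A : Type*} [DecidableEq A] (N : ℕ) (hN : 1 ≤ N) (a : A)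
    (s : List A) (hnd : s.Nodup) (hlen : s.length ≤ N)
    (b : A) (hb : b ≠ a) :
    (lruFocus a s = none → lruFocus a (lruAccess N s b) = none) ∧
    (∀ x : Finset A, lruFocus a s = some x → (x ∪ {b}).card < N →
        lruFocus a (lruAccess N s b) = some (x ∪ {b})) ∧
    (∀ x : Finset A, lruFocus a s = some x → (x ∪ {b}).card = N →
        lruFocus a (lruAccess N s b) = none) :=
  lruFocus_access_ne_general N a s hnd b hb
end

section
/- Let V be a finite type with |V| = n ≥ 1, let E be a relation on V (a directed graph), and let v0 : V. Consider LRU caches of associativity n over the address type Option V, where none is a fresh block w and some v represents the vertex v. Then the graph has a Hamiltonian circuit through v0 if and only if there exists a sequence w_0 = v0, w_1, …, w_n = v0 in V with E w_i w_{i+1} for all i < n such that, executing from the empty cache the trace consisting of an access to the block w followed by accesses to the blocks w_1, …, w_n (as elements some w_i of Option V), the block w is not contained in the resulting LRU cache state (i.e., the next access to w would be a miss). -/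
/-!
Write the trace as the fresh block `w` followed by `l = [w 1, …, w n]`. An LRU cache lists the
distinct blocks of a trace by the recency of their last access and keeps the `n` youngest, so `w`
survives exactly when `l` touches fewer than `n` distinct blocks; as `l` has length `n`, `w` is
evicted iff `l` has no repetition. Since `w n = w 0`, `l` is a rotation of `[w 0, …, w (n-1)]`, so
this says that the closed walk visits `n` distinct vertices, i.e. (as `|V| = n`) every vertex
exactly once.
-/

namespace List

variable {A : Type*} [DecidableEq A]

theorem dedup_concat (l : List A) (b : A) : (l ++ [b]).dedup = l.dedup.erase b ++ [b] := by
  induction l with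
  | nil => simp
  | cons a l ih =>
    rw [cons_append, dedup_cons, dedup_cons, ih]
    by_cases ha : a ∈ l
    · simp [ha]
    · by_cases hab : a = b
      · subst hab; simp [ha, erase_of_not_mem (mt mem_dedup.1 ha)]
      · simp [ha, hab]

theorem take_erase_take (l : List A) (b : A) (N : ℕ) :
    ((l.take (N + 1)).erase b).take N = (l.erase b).take N := by
  induction l generalizing N with
  | nil => rfl
  | cons a l ih =>
    by_cases hab : a = b
    · subst hab; simp [take_take]
    · cases N with
      | zero => simp
      | succ M => simp [hab, ih]

theorem nodup_map_range_iff_injective {α : Type*} (w : ℕ → α) (n : ℕ) :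
    ((range n).map w).Nodup ↔ Function.Injective (fun i : Fin n => w i) := by
  rw [← map_coe_finRange_eq_range, map_map, ← ofFn_eq_map, nodup_ofFn]
  rfl

theorem map_range_succ_eq_rotate_one {α : Type*} (w : ℕ → α) {n : ℕ} (hw : w n = w 0) :
    (range n).map (fun i => w (i + 1)) = ((range n).map w).rotate 1 := by
  cases n with
  | zero => rfl
  | succ m =>
    calc (range (m + 1)).map (fun i => w (i + 1))
        = (range m).map (fun i => w (i + 1)) ++ [w 0] := by
          rw [range_succ, map_append, map_singleton, hw]
      _ = ((range (m + 1)).map w).rotate 1 := by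
          rw [range_succ_eq_map, map_cons, map_map, rotate_cons_succ, rotate_zero]
          rfl

end List

section LRU

variable {A : Type*} [DecidableEq A]

/-- `List.dedup` keeps the last occurrence of each element, so `t.dedup.reverse` lists the
blocks of `t` youngest first. -/
theorem lruRun_eq_take_reverse_dedup (N : ℕ) (t : List A) :
    lruRun N t = t.dedup.reverse.take N := by
  induction t using List.reverseRecOn with
  | nil => simp [lruRun]
  | append_singleton t b ih =>
    have hnd := List.nodup_dedup t
    rw [lruRun, List.foldl_concat, ← lruRun, ih, lruAccess_take, lruAccess, List.dedup_concat,
      List.reverse_append, List.reverse_singleton, List.singleton_append,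
      (List.nodup_reverse.2 hnd).erase_eq_filter, hnd.erase_eq_filter, List.filter_reverse]

theorem mem_lruRun_cons_iff {N : ℕ} {x : A} {l : List A} (hx : x ∉ l) :
    x ∈ lruRun N (x :: l) ↔ l.dedup.length < N := by
  have hx' : x ∉ l.dedup.reverse := by simpa using hx
  rw [lruRun_eq_take_reverse_dedup, List.dedup_cons_of_notMem hx, List.reverse_cons,
    List.take_append, List.mem_append, List.length_reverse, ← Nat.sub_pos_iff_lt]
  cases N - l.dedup.length <;> simp [mt List.mem_of_mem_take hx']

theorem notMem_lruRun_cons_iff_nodup {x : A} {l : List A} (hx : x ∉ l) :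
    x ∉ lruRun l.length (x :: l) ↔ l.Nodup := by
  rw [mem_lruRun_cons_iff hx, not_lt, ← List.dedup_eq_self,
    ← (List.dedup_sublist l).length_eq]
  exact ⟨fun h => le_antisymm (List.dedup_sublist l).length_le h, ge_of_eq⟩

end LRU

theorem exists_hamiltonian_iff_exists_closed_walk {V : Type*} [Fintype V] {n : ℕ}
    (hV : Fintype.card V = n) (hn : 1 ≤ n) (E : V → V → Prop) (v0 : V) :
    (∃ σ : Fin n ≃ V,
        σ ⟨0, hn⟩ = v0 ∧
        (∀ i : ℕ, ∀ h : i + 1 < n, E (σ ⟨i, Nat.lt_of_succ_lt h⟩) (σ ⟨i + 1, h⟩)) ∧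
        E (σ ⟨n - 1, Nat.sub_lt hn Nat.one_pos⟩) (σ ⟨0, hn⟩)) ↔
    ∃ w : ℕ → V, w 0 = v0 ∧ w n = v0 ∧ (∀ i < n, E (w i) (w (i + 1))) ∧
        Function.Injective (fun i : Fin n => w i) := by
  constructor
  · rintro ⟨σ, hσ0, hσE, hσlast⟩
    have hmod : ∀ i < n, i % n = i := fun i hi => Nat.mod_eq_of_lt hi
    refine ⟨fun i => σ ⟨i % n, Nat.mod_lt i hn⟩, ?_, ?_, ?_, ?_⟩
    · simpa [Nat.zero_mod] using hσ0
    · simpa [Nat.mod_self] using hσ0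
    · intro i hi
      rcases Nat.lt_or_ge (i + 1) n with hi' | hi'
      · simpa [hmod i hi, hmod (i + 1) hi'] using hσE i hi'
      · obtain rfl : i = n - 1 := by omega
        simpa [hmod (n - 1) hi, Nat.sub_add_cancel hn, Nat.mod_self] using hσlast
    · intro i j hij
      simpa [hmod i i.2, hmod j j.2, Fin.ext_iff] using σ.injective hij
  · rintro ⟨w, hw0, hwn, hwE, hw⟩
    have hbij : Function.Bijective (fun i : Fin n => w i) :=
      (Fintype.bijective_iff_injective_and_card _).2 ⟨hw, by simp [hV]⟩
    refine ⟨Equiv.ofBijective _ hbij, hw0, fun i h => hwE i (by omega), ?_⟩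
    have hlast := hwE (n - 1) (by omega)
    rwa [Nat.sub_add_cancel hn, hwn, ← hw0] at hlast

/-- NP-hardness reduction for the may-miss problem: a directed graph `E` on `n ≥ 1`
vertices has a Hamiltonian circuit through `v0` iff there is a closed walk
`v0 = w 0, w 1, …, w n = v0` along `E`-edges such that, in an LRU cache of
associativity `n` over `Option V` (with `none` the fresh block `w`), after
accessing `w` and then the blocks `w 1, …, w n`, the block `w` has been evicted. -/
theorem hamiltonian_iff_may_miss (V : Type*) [Fintype V] [DecidableEq V]
    (n : ℕ) (hV : Fintype.card V = n) (hn : 1 ≤ n)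
    (E : V → V → Prop) (v0 : V) :
    (∃ σ : Fin n ≃ V,
        σ ⟨0, by omega⟩ = v0 ∧
        (∀ i : ℕ, ∀ h : i + 1 < n, E (σ ⟨i, by omega⟩) (σ ⟨i + 1, h⟩)) ∧
        E (σ ⟨n - 1, by omega⟩) (σ ⟨0, by omega⟩)) ↔
    (∃ w : ℕ → V, w 0 = v0 ∧ w n = v0 ∧ (∀ i < n, E (w i) (w (i + 1))) ∧
        (none : Option V) ∉
          lruRun n ((none : Option V) ::
            (List.range n).map (fun i => some (w (i + 1))))) := by
  rw [exists_hamiltonian_iff_exists_closed_walk hV hn]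
  refine exists_congr fun w => and_congr_right fun hw0 => and_congr_right fun hwn =>
    and_congr_right fun _ => ?_
  rw [← List.nodup_map_range_iff_injective, ← List.nodup_rotate (n := 1),
    ← List.map_range_succ_eq_rotate_one w (hwn.trans hw0.symm),
    ← List.nodup_map_iff (Option.some_injective V), List.map_map]
  have hmiss := notMem_lruRun_cons_iff_nodup (x := none)
    (l := (List.range n).map fun i => some (w (i + 1))) (by simp)
  rw [List.length_map, List.length_range] at hmiss
  exact hmiss.symm
end
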